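/- arXiv:2605.25275 — 2 statements merged into one kernel-verified Lean document; each statement's English description precedes it below -/
import Mathlib

section
/- Let K ∈ ℝ^{n×n} be real symmetric positive semidefinite with eigenvalues λ₁, …, λ_n and orthonormal eigenvectors v₁, …, v_n, let r₀ ∈ ℝⁿ with L₀ := ½‖r₀‖² ≥ 1, and let constants c > δ > 0 satisfy (c − δ)λ_i ≤ (v_iᵀ r₀)² ≤ (c + δ)λ_i for all i ∈ [n]. Let ε ∈ (0,1) and η > 0 with η‖K‖_op ≤ 1, and suppose r_t = (I − ηK)^t r₀ + Δ_t with ‖Δ_t‖ ≤ ε/(4√L₀) for all integer t ≥ 0. Then tr K > 0, (c − δ)·tr K ≤ 2L₀, and for every t ≥ 0: ½‖r_t‖² ≤ ((c + δ)/(c − δ)) · (tr[(I − ηK)^{2t} K] / tr K) · L₀ + ε/2. -/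
/-!
In the orthonormal eigenbasis `v` of `K`, gradient descent acts diagonally: the `i`-th coordinate
of `s_t = (I - ηK)^t r₀` is `(1 - ηλᵢ)^t ⟪vᵢ, r₀⟫`. Hence, by the upper alignment bound,
`‖s_t‖² ≤ (c + δ) ∑ (1 - ηλᵢ)^{2t} λᵢ = (c + δ) tr[(I - ηK)^{2t} K]`, while summing the lower
alignment bound gives `(c - δ) tr K ≤ ‖r₀‖² = 2L₀`. The step size condition makes
`|1 - ηλᵢ| ≤ 1`, so `‖s_t‖ ≤ ‖r₀‖ = √(2L₀)`; together with `‖Δ_t‖ ≤ ε / (4√L₀)` and `L₀ ≥ 1`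
this keeps the cross and quadratic terms of `½‖s_t + Δ_t‖²` below `ε / 2`.
-/

open Matrix

noncomputable def vecEuclidNorm {n : ℕ} (x : Fin n → ℝ) : ℝ :=
  Real.sqrt (∑ i, x i ^ 2)

noncomputable def l2OpNorm {n m : ℕ} (A : Matrix (Fin n) (Fin m) ℝ) : ℝ :=
  ‖LinearMap.toContinuousLinearMap (Matrix.toEuclideanLin A)‖

namespace Matrix

section Orthonormal

variable {ι R : Type*} [Fintype ι] [DecidableEq ι] [CommRing R] {v : ι → ι → R}

lemma of_mul_transpose_of_eq_one (hv : ∀ i j, v i ⬝ᵥ v j = if i = j then 1 else 0) :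
    of v * (of v)ᵀ = 1 := by
  ext i j
  simpa [mul_apply, one_apply, dotProduct] using hv i j

lemma sum_sq_dotProduct_eq_dotProduct_self
    (hv : ∀ i j, v i ⬝ᵥ v j = if i = j then 1 else 0) (x : ι → R) :
    ∑ i, (v i ⬝ᵥ x) ^ 2 = x ⬝ᵥ x := by
  have hPtP : (of v)ᵀ * of v = 1 := mul_eq_one_comm.mp (of_mul_transpose_of_eq_one hv)
  calc ∑ i, (v i ⬝ᵥ x) ^ 2 = (of v *ᵥ x) ⬝ᵥ (of v *ᵥ x) := by simp [dotProduct, sq, mulVec]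
    _ = x ⬝ᵥ x := by
      rw [dotProduct_mulVec, ← mulVec_transpose, mulVec_mulVec, hPtP, one_mulVec]

lemma trace_eq_sum_of_mulVec_eq_smul
    (hv : ∀ i j, v i ⬝ᵥ v j = if i = j then 1 else 0) {A : Matrix ι ι R} {α : ι → R}
    (hA : ∀ i, A *ᵥ v i = α i • v i) : A.trace = ∑ i, α i := by
  have hPtP : (of v)ᵀ * of v = 1 := mul_eq_one_comm.mp (of_mul_transpose_of_eq_one hv)
  calc A.trace = (of v * A * (of v)ᵀ).trace := by
        rw [trace_mul_cycle, hPtP, one_mul]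
    _ = ∑ i, v i ⬝ᵥ (A *ᵥ v i) := by
        simp only [trace, diag, mul_apply, dotProduct, mulVec, Finset.mul_sum, Finset.sum_mul,
          transpose_apply, of_apply, mul_assoc]
        exact Finset.sum_congr rfl fun i _ => Finset.sum_comm
    _ = ∑ i, α i := by simp [hA, hv]

end Orthonormal

lemma pow_mulVec_eq_pow_smul {ι R : Type*} [Fintype ι] [DecidableEq ι] [CommRing R]
    {A : Matrix ι ι R} {w : ι → R} {μ : R} (h : A *ᵥ w = μ • w) (t : ℕ) :
    (A ^ t) *ᵥ w = μ ^ t • w := by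
  induction t with
  | zero => simp
  | succ t ih => rw [pow_succ, ← mulVec_mulVec, h, mulVec_smul, ih, smul_smul, pow_succ']

lemma IsSymm.dotProduct_mulVec_of_mulVec_eq_smul {ι R : Type*} [Fintype ι] [CommRing R]
    {A : Matrix ι ι R} (hA : A.IsSymm) {w : ι → R} {μ : R} (h : A *ᵥ w = μ • w) (x : ι → R) :
    w ⬝ᵥ (A *ᵥ x) = μ * (w ⬝ᵥ x) := by
  rw [dotProduct_mulVec, ← mulVec_transpose, hA.eq, h, smul_dotProduct, smul_eq_mul]

lemma PosSemidef.nonneg_of_mulVec_eq_smul {ι : Type*} [Fintype ι] {A : Matrix ι ι ℝ}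
    (hA : A.PosSemidef) {w : ι → ℝ} {μ : ℝ} (h : A *ᵥ w = μ • w) (hw : w ≠ 0) : 0 ≤ μ := by
  have hquad := hA.dotProduct_mulVec_nonneg w
  rw [h, dotProduct_smul, smul_eq_mul] at hquad
  exact nonneg_of_mul_nonneg_left hquad (dotProduct_star_self_pos_iff.mpr hw)

end Matrix

lemma vecEuclidNorm_eq_norm_toLp {n : ℕ} (x : Fin n → ℝ) :
    vecEuclidNorm x = ‖WithLp.toLp 2 x‖ := by
  simp [vecEuclidNorm, EuclideanSpace.norm_eq, sq_abs]

lemma norm_toLp_sq {ι : Type*} [Fintype ι] (x : ι → ℝ) :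
    ‖WithLp.toLp 2 x‖ ^ 2 = x ⬝ᵥ x := by
  rw [EuclideanSpace.real_norm_sq_eq]
  simp [dotProduct, sq]

lemma abs_le_l2OpNorm_of_mulVec_eq_smul {n : ℕ} {A : Matrix (Fin n) (Fin n) ℝ}
    {w : Fin n → ℝ} {μ : ℝ} (h : A *ᵥ w = μ • w) (hw : w ≠ 0) : |μ| ≤ l2OpNorm A := by
  have hw' : 0 < ‖WithLp.toLp 2 w‖ := by simpa using hw
  refine le_of_mul_le_mul_right ?_ hw'
  calc |μ| * ‖WithLp.toLp 2 w‖ = ‖WithLp.toLp 2 (A *ᵥ w)‖ := by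
        rw [h, WithLp.toLp_smul, norm_smul, Real.norm_eq_abs]
    _ ≤ l2OpNorm A * ‖WithLp.toLp 2 w‖ := by
        simpa [l2OpNorm] using
          (LinearMap.toContinuousLinearMap (toEuclideanLin A)).le_opNorm (WithLp.toLp 2 w)

lemma abs_one_sub_mul_le_one_of_mul_l2OpNorm_le_one {n : ℕ} {A : Matrix (Fin n) (Fin n) ℝ}
    (hA : A.PosSemidef) {w : Fin n → ℝ} {μ η : ℝ} (h : A *ᵥ w = μ • w) (hw : w ≠ 0)
    (hη : 0 ≤ η) (hηA : η * l2OpNorm A ≤ 1) : |1 - η * μ| ≤ 1 := by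
  have hμ := hA.nonneg_of_mulVec_eq_smul h hw
  have hle := abs_le_l2OpNorm_of_mulVec_eq_smul h hw
  rw [abs_of_nonneg hμ] at hle
  rw [abs_le]
  constructor <;> nlinarith [mul_le_mul_of_nonneg_left hle hη]

section GradientDescent

variable {ι : Type*} [Fintype ι] [DecidableEq ι] {K : Matrix ι ι ℝ} {lam : ι → ℝ}
  {v : ι → ι → ℝ} (η : ℝ)

lemma mul_trace_le_dotProduct_self (hv : ∀ i j, v i ⬝ᵥ v j = if i = j then 1 else 0)
    (heig : ∀ i, K *ᵥ v i = lam i • v i) {x : ι → ℝ} {C : ℝ}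
    (hx : ∀ i, C * lam i ≤ (v i ⬝ᵥ x) ^ 2) : C * K.trace ≤ x ⬝ᵥ x := by
  rw [trace_eq_sum_of_mulVec_eq_smul hv heig, Finset.mul_sum,
    ← sum_sq_dotProduct_eq_dotProduct_self hv]
  exact Finset.sum_le_sum fun i _ => hx i

lemma dotProduct_self_le_mul_trace (hv : ∀ i j, v i ⬝ᵥ v j = if i = j then 1 else 0)
    (heig : ∀ i, K *ᵥ v i = lam i • v i) {x : ι → ℝ} {C : ℝ}
    (hx : ∀ i, (v i ⬝ᵥ x) ^ 2 ≤ C * lam i) : x ⬝ᵥ x ≤ C * K.trace := by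
  rw [trace_eq_sum_of_mulVec_eq_smul hv heig, Finset.mul_sum,
    ← sum_sq_dotProduct_eq_dotProduct_self hv]
  exact Finset.sum_le_sum fun i _ => hx i

lemma one_sub_smul_mulVec_eq_smul {w : ι → ℝ} {μ : ℝ} (h : K *ᵥ w = μ • w) :
    (1 - η • K) *ᵥ w = (1 - η * μ) • w := by
  rw [sub_mulVec, one_mulVec, smul_mulVec, h, smul_smul, sub_smul, one_smul]

lemma trace_one_sub_smul_pow_mul (hv : ∀ i j, v i ⬝ᵥ v j = if i = j then 1 else 0)
    (heig : ∀ i, K *ᵥ v i = lam i • v i) (m : ℕ) :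
    ((1 - η • K) ^ m * K).trace = ∑ i, (1 - η * lam i) ^ m * lam i := by
  refine trace_eq_sum_of_mulVec_eq_smul hv fun i => ?_
  rw [← mulVec_mulVec, heig, mulVec_smul,
    pow_mulVec_eq_pow_smul (one_sub_smul_mulVec_eq_smul η (heig i)), smul_smul, mul_comm]

lemma dotProduct_self_one_sub_smul_pow_mulVec (hK : K.IsSymm)
    (hv : ∀ i j, v i ⬝ᵥ v j = if i = j then 1 else 0) (heig : ∀ i, K *ᵥ v i = lam i • v i)
    (x : ι → ℝ) (t : ℕ) :
    ((1 - η • K) ^ t *ᵥ x) ⬝ᵥ ((1 - η • K) ^ t *ᵥ x)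
      = ∑ i, (1 - η * lam i) ^ (2 * t) * (v i ⬝ᵥ x) ^ 2 := by
  have hsymm : ((1 - η • K) ^ t).IsSymm := (isSymm_one.sub (hK.smul η)).pow t
  rw [← sum_sq_dotProduct_eq_dotProduct_self hv]
  refine Finset.sum_congr rfl fun i _ => ?_
  rw [hsymm.dotProduct_mulVec_of_mulVec_eq_smul
    (pow_mulVec_eq_pow_smul (one_sub_smul_mulVec_eq_smul η (heig i)) t), mul_pow, ← pow_mul,
    mul_comm t 2]

lemma dotProduct_self_one_sub_smul_pow_mulVec_le_mul_trace (hK : K.IsSymm)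
    (hv : ∀ i j, v i ⬝ᵥ v j = if i = j then 1 else 0) (heig : ∀ i, K *ᵥ v i = lam i • v i)
    {x : ι → ℝ} {C : ℝ} (hx : ∀ i, (v i ⬝ᵥ x) ^ 2 ≤ C * lam i) (t : ℕ) :
    ((1 - η • K) ^ t *ᵥ x) ⬝ᵥ ((1 - η • K) ^ t *ᵥ x) ≤ C * ((1 - η • K) ^ (2 * t) * K).trace := by
  rw [dotProduct_self_one_sub_smul_pow_mulVec η hK hv heig, trace_one_sub_smul_pow_mul η hv heig,
    Finset.mul_sum]
  refine Finset.sum_le_sum fun i _ => ?_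
  calc (1 - η * lam i) ^ (2 * t) * (v i ⬝ᵥ x) ^ 2
      ≤ (1 - η * lam i) ^ (2 * t) * (C * lam i) :=
        mul_le_mul_of_nonneg_left (hx i) ((even_two_mul t).pow_nonneg _)
    _ = C * ((1 - η * lam i) ^ (2 * t) * lam i) := by ring

lemma dotProduct_self_one_sub_smul_pow_mulVec_le (hK : K.IsSymm)
    (hv : ∀ i j, v i ⬝ᵥ v j = if i = j then 1 else 0) (heig : ∀ i, K *ᵥ v i = lam i • v i)
    (hstep : ∀ i, |1 - η * lam i| ≤ 1) (x : ι → ℝ) (t : ℕ) :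
    ((1 - η • K) ^ t *ᵥ x) ⬝ᵥ ((1 - η • K) ^ t *ᵥ x) ≤ x ⬝ᵥ x := by
  rw [dotProduct_self_one_sub_smul_pow_mulVec η hK hv heig,
    ← sum_sq_dotProduct_eq_dotProduct_self hv]
  refine Finset.sum_le_sum fun i _ => mul_le_of_le_one_left (sq_nonneg _) ?_
  rw [pow_mul]
  exact pow_le_one₀ (sq_nonneg _) ((sq_le_one_iff_abs_le_one _).mpr (hstep i))

end GradientDescent

lemma half_norm_add_sq_le {E : Type*} [SeminormedAddCommGroup E] {x y : E} {L ε : ℝ}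
    (hL : 1 ≤ L) (hε0 : 0 ≤ ε) (hε1 : ε ≤ 1) (hx : ‖x‖ ^ 2 ≤ 2 * L)
    (hy : ‖y‖ ≤ ε / (4 * √L)) : ‖x + y‖ ^ 2 / 2 ≤ ‖x‖ ^ 2 / 2 + ε / 2 := by
  have hs : 1 ≤ √L := Real.one_le_sqrt.mpr hL
  have hy' : ‖y‖ * (4 * √L) ≤ ε := (le_div_iff₀ (by positivity)).mp hy
  have hx' : ‖x‖ ^ 2 ≤ 2 * √L ^ 2 := by rwa [Real.sq_sqrt (by linarith)]
  -- `‖x‖ ‖y‖ ≤ √2 ε / 4`, and `√2 / 4 < 15 / 32`.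
  have hcross : ‖x‖ * ‖y‖ ≤ 15 / 32 * ε := by
    have hprod : (‖x‖ * ‖y‖) ^ 2 * (16 * √L ^ 2) ≤ ε ^ 2 / 8 * (16 * √L ^ 2) :=
      calc (‖x‖ * ‖y‖) ^ 2 * (16 * √L ^ 2) = ‖x‖ ^ 2 * (‖y‖ * (4 * √L)) ^ 2 := by ring
        _ ≤ 2 * √L ^ 2 * ε ^ 2 := by gcongr
        _ = ε ^ 2 / 8 * (16 * √L ^ 2) := by ring
    have hsq := le_of_mul_le_mul_right hprod (by positivity)
    exact le_of_sq_le_sq (by nlinarith) (by positivity)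
  have hsmall : ‖y‖ ^ 2 ≤ ε / 16 := by nlinarith [norm_nonneg y]
  calc ‖x + y‖ ^ 2 / 2 ≤ (‖x‖ + ‖y‖) ^ 2 / 2 := by gcongr; exact norm_add_le x y
    _ = ‖x‖ ^ 2 / 2 + ‖x‖ * ‖y‖ + ‖y‖ ^ 2 / 2 := by ring
    _ ≤ ‖x‖ ^ 2 / 2 + ε / 2 := by linarith

/-- **Corollary 4.4**: explicit dependence of the convergence bound on the
initial loss `L₀ = ½‖r₀‖²`. -/
theorem convergence_bound_initial_loss (n : ℕ)
    (K : Matrix (Fin n) (Fin n) ℝ) (hK : K.PosSemidef)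
    (lam : Fin n → ℝ) (v : Fin n → Fin n → ℝ)
    (hortho : ∀ i j, v i ⬝ᵥ v j = if i = j then (1 : ℝ) else 0)
    (heig : ∀ i, K.mulVec (v i) = lam i • v i)
    (r₀ : Fin n → ℝ) (L₀ : ℝ) (hL₀def : L₀ = (1 / 2) * (r₀ ⬝ᵥ r₀)) (hL₀ : 1 ≤ L₀)
    (c δ : ℝ) (hδ : 0 < δ) (hδc : δ < c)
    (halign : ∀ i, (c - δ) * lam i ≤ (v i ⬝ᵥ r₀) ^ 2 ∧
      (v i ⬝ᵥ r₀) ^ 2 ≤ (c + δ) * lam i)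
    (ε η : ℝ) (hε : ε ∈ Set.Ioo (0 : ℝ) 1) (hη : 0 < η)
    (hηK : η * l2OpNorm K ≤ 1)
    (r Δ : ℕ → Fin n → ℝ)
    (hr : ∀ t : ℕ, r t = ((1 - η • K) ^ t).mulVec r₀ + Δ t)
    (hΔ : ∀ t : ℕ, vecEuclidNorm (Δ t) ≤ ε / (4 * Real.sqrt L₀)) :
    0 < K.trace ∧ (c - δ) * K.trace ≤ 2 * L₀ ∧
    ∀ t : ℕ,
      (1 / 2) * (r t ⬝ᵥ r t) ≤
        (c + δ) / (c - δ) * (((1 - η • K) ^ (2 * t) * K).trace / K.trace) * L₀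
          + ε / 2 := by
  obtain ⟨hε0, hε1⟩ := hε
  have hv0 : ∀ i, v i ≠ 0 := fun i h => by simpa [h] using hortho i i
  have hKsymm : K.IsSymm := (conjTranspose_eq_transpose_of_trivial K).symm.trans hK.isHermitian
  have hlower : (c - δ) * K.trace ≤ 2 * L₀ := by
    linarith [mul_trace_le_dotProduct_self hortho heig fun i => (halign i).1]
  have hupper : 2 * L₀ ≤ (c + δ) * K.trace := by
    linarith [dotProduct_self_le_mul_trace hortho heig fun i => (halign i).2]
  have htrace_pos : 0 < K.trace := pos_of_mul_pos_right (a := c + δ) (by linarith) (by linarith)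
  refine ⟨htrace_pos, hlower, fun t => ?_⟩
  set s := (1 - η • K) ^ t *ᵥ r₀
  have hs_nonneg : 0 ≤ s ⬝ᵥ s := by rw [← norm_toLp_sq]; positivity
  have hs_trace := dotProduct_self_one_sub_smul_pow_mulVec_le_mul_trace η hKsymm hortho heig
    (fun i => (halign i).2) t
  have hs_loss := dotProduct_self_one_sub_smul_pow_mulVec_le η hKsymm hortho heig
    (fun i => abs_one_sub_mul_le_one_of_mul_l2OpNorm_le_one hK (heig i) (hv0 i) hη.le hηK) r₀ t
  have hperturb := half_norm_add_sq_le (x := WithLp.toLp 2 s) (y := WithLp.toLp 2 (Δ t)) hL₀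
    hε0.le hε1.le (by rw [norm_toLp_sq]; linarith)
    (by rw [← vecEuclidNorm_eq_norm_toLp]; exact hΔ t)
  rw [← WithLp.toLp_add, norm_toLp_sq, norm_toLp_sq, ← hr t] at hperturb
  have hratio : 1 / 2 ≤ L₀ / (c - δ) / K.trace := by
    rw [le_div_iff₀ htrace_pos, le_div_iff₀ (by linarith)]; linarith
  calc (1 / 2) * (r t ⬝ᵥ r t) ≤ (1 / 2) * (s ⬝ᵥ s) + ε / 2 := by linarith
    _ ≤ (c + δ) * ((1 - η • K) ^ (2 * t) * K).trace * (L₀ / (c - δ) / K.trace) + ε / 2 := by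
      linarith [mul_le_mul_of_nonneg_left hratio hs_nonneg,
        mul_le_mul_of_nonneg_right hs_trace (le_trans (by norm_num) hratio)]
    _ = _ := by ring
end

section
/- Let f : ℝ^p → ℝⁿ be twice continuously differentiable, y ∈ ℝⁿ, w ∈ ℝ^p, r := f(w) − y, J(w) its Jacobian at w, K(w) := J(w)J(w)ᵀ, η > 0, and w' := w − ηJ(w)ᵀ r. Suppose that for every i ∈ [n] and every point ξ on the line segment from w to w', the Hessian of the i-th component satisfies ‖∇²f_i(ξ)‖_op ≤ H. Then ‖f(w') − f(w) + ηK(w)r‖ ≤ (√n/2) · η² · H · ‖K(w)‖_op · ‖r‖². -/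
open Matrix

noncomputable def enorm {n : ℕ} (x : Fin n → ℝ) : ℝ :=
  Real.sqrt (∑ i, x i ^ 2)

/-!
Taylor-expand each output `f_i` to second order along the segment `[w, w']`. Since
`w' - w = -η Jᵀ r`, the first-order term `J (w' - w)` is exactly `-η K r`, and each component
of the remainder is at most `H ‖w' - w‖² / 2`. Finally `‖w' - w‖² = η² rᵀ K r ≤ η² ‖K‖ ‖r‖²`,
and passing from a componentwise bound to the Euclidean norm costs the factor `√n`.
-/

open Set

theorem enorm_eq_norm_toLp {n : ℕ} (x : Fin n → ℝ) : _root_.enorm x = ‖WithLp.toLp 2 x‖ := by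
  simp [_root_.enorm, EuclideanSpace.norm_eq]

theorem enorm_sq {n : ℕ} (x : Fin n → ℝ) : _root_.enorm x ^ 2 = x ⬝ᵥ x := by
  rw [enorm_eq_norm_toLp, ← real_inner_self_eq_norm_sq, EuclideanSpace.inner_toLp_toLp]
  simp [dotProduct]

theorem sq_enorm_smul {n : ℕ} (c : ℝ) (x : Fin n → ℝ) :
    _root_.enorm (c • x) ^ 2 = c ^ 2 * _root_.enorm x ^ 2 := by
  rw [enorm_eq_norm_toLp, enorm_eq_norm_toLp, WithLp.toLp_smul, norm_smul, Real.norm_eq_abs,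
    mul_pow, sq_abs]

theorem enorm_le_sqrt_card_mul {n : ℕ} {x : Fin n → ℝ} {c : ℝ} (hx : ∀ i, |x i| ≤ c) :
    _root_.enorm x ≤ Real.sqrt n * c := by
  rcases Nat.eq_zero_or_pos n with rfl | hn
  · simp [_root_.enorm]
  have hc : 0 ≤ c := (abs_nonneg _).trans (hx ⟨0, hn⟩)
  rw [← Real.sqrt_sq hc, ← Real.sqrt_mul n.cast_nonneg, _root_.enorm]
  refine Real.sqrt_le_sqrt ?_
  calc ∑ i, x i ^ 2 ≤ ∑ _i : Fin n, c ^ 2 := Finset.sum_le_sum fun i _ => by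
        simpa only [sq_abs] using pow_le_pow_left₀ (abs_nonneg _) (hx i) 2
    _ = n * c ^ 2 := by simp

theorem abs_dotProduct_mulVec_le {n : ℕ} (A : Matrix (Fin n) (Fin n) ℝ) (v : Fin n → ℝ) :
    |v ⬝ᵥ A *ᵥ v| ≤ l2OpNorm A * _root_.enorm v ^ 2 := by
  set T := LinearMap.toContinuousLinearMap (Matrix.toEuclideanLin A)
  have hT : v ⬝ᵥ A *ᵥ v = inner ℝ (T (WithLp.toLp 2 v)) (WithLp.toLp 2 v) := by
    simp [T, EuclideanSpace.inner_toLp_toLp]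
  rw [hT, enorm_eq_norm_toLp, l2OpNorm, sq, ← mul_assoc]
  exact (abs_real_inner_le_norm _ _).trans
    (mul_le_mul_of_nonneg_right (T.le_opNorm _) (norm_nonneg _))

theorem enorm_transpose_mulVec_sq_le {n p : ℕ} (A : Matrix (Fin n) (Fin p) ℝ) (r : Fin n → ℝ) :
    _root_.enorm (Aᵀ *ᵥ r) ^ 2 ≤ l2OpNorm (A * Aᵀ) * _root_.enorm r ^ 2 := by
  have h : r ⬝ᵥ (A * Aᵀ) *ᵥ r = Aᵀ *ᵥ r ⬝ᵥ Aᵀ *ᵥ r := by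
    rw [← mulVec_mulVec, dotProduct_mulVec, mulVec_transpose]
  rw [enorm_sq, ← h]
  exact (le_abs_self _).trans (abs_dotProduct_mulVec_le _ _)

/-- Fencing twice: first `‖g' t - g' 0‖ ≤ C t`, then the remainder `g t - g 0 - t g' 0` stays
below `C t² / 2`. -/
theorem norm_sub_sub_deriv_le_of_norm_deriv2_le {E : Type*} [NormedAddCommGroup E]
    [NormedSpace ℝ E] {g g' g'' : ℝ → E} {C : ℝ}
    (hg : ∀ t ∈ Icc (0 : ℝ) 1, HasDerivAt g (g' t) t)
    (hg' : ∀ t ∈ Icc (0 : ℝ) 1, HasDerivAt g' (g'' t) t)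
    (hC : ∀ t ∈ Icc (0 : ℝ) 1, ‖g'' t‖ ≤ C) :
    ‖g 1 - g 0 - g' 0‖ ≤ C / 2 := by
  have hslope : ∀ t ∈ Icc (0 : ℝ) 1, ‖g' t - g' 0‖ ≤ C * t := by
    simpa using norm_image_sub_le_of_norm_deriv_le_segment'
      (fun t ht => (hg' t ht).hasDerivWithinAt) fun t ht => hC t (Ico_subset_Icc_self ht)
  have hremainder : ∀ t ∈ Icc (0 : ℝ) 1,
      HasDerivAt (fun s => g s - g 0 - s • g' 0) (g' t - g' 0) t := fun t ht =>
    (((hg t ht).sub_const (g 0)).sub ((hasDerivAt_id t).smul_const (g' 0))).congr_deriv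
      (by rw [one_smul])
  have hbound : ∀ t, HasDerivAt (fun s => C * s ^ 2 / 2) (C * t) t := fun t =>
    (((hasDerivAt_pow 2 t).const_mul C).div_const 2).congr_deriv (by norm_num; ring)
  simpa using image_norm_le_of_norm_deriv_right_le_deriv_boundary
    (fun t ht => (hremainder t ht).continuousAt.continuousWithinAt)
    (fun t ht => (hremainder t (Ico_subset_Icc_self ht)).hasDerivWithinAt) (by simp) hbound
    (fun t ht => hslope t (Ico_subset_Icc_self ht)) (right_mem_Icc.2 zero_le_one)

theorem norm_sub_sub_fderiv_le_of_norm_fderiv_fderiv_le {E F : Type*} [NormedAddCommGroup E]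
    [NormedSpace ℝ E] [NormedAddCommGroup F] [NormedSpace ℝ F] {φ : E → F}
    (hφ : ContDiff ℝ 2 φ) {x y : E} {C : ℝ}
    (hC : ∀ ξ ∈ segment ℝ x y, ‖fderiv ℝ (fderiv ℝ φ) ξ (y - x) (y - x)‖ ≤ C) :
    ‖φ y - φ x - fderiv ℝ φ x (y - x)‖ ≤ C / 2 := by
  have hφ' : Differentiable ℝ (fderiv ℝ φ) :=
    (hφ.fderiv_right (m := 1) le_rfl).differentiable one_ne_zero
  have hline : ∀ t : ℝ, HasDerivAt (fun s : ℝ => x + s • (y - x)) (y - x) t := fun t => by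
    simpa using ((hasDerivAt_id t).smul_const (y - x)).const_add x
  simpa using norm_sub_sub_deriv_le_of_norm_deriv2_le
    (g := fun t => φ (x + t • (y - x))) (g' := fun t => fderiv ℝ φ (x + t • (y - x)) (y - x))
    (fun t _ => ((hφ.differentiable two_ne_zero) _).hasFDerivAt.comp_hasDerivAt t (hline t))
    (fun t _ => (ContinuousLinearMap.apply ℝ F (y - x)).hasFDerivAt.comp_hasDerivAt t
      ((hφ' _).hasFDerivAt.comp_hasDerivAt t (hline t)))
    (fun t ht => hC _ (segment_eq_image' ℝ x y ▸ mem_image_of_mem _ ht))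

theorem ContinuousLinearMap.apply_apply_eq_dotProduct_mulVec {ι : Type*} [Fintype ι]
    [DecidableEq ι] (B : (ι → ℝ) →L[ℝ] (ι → ℝ) →L[ℝ] ℝ) (v w : ι → ℝ) :
    B v w = v ⬝ᵥ (Matrix.of fun a b => B (Pi.single a 1) (Pi.single b 1)) *ᵥ w := by
  let B' : (ι → ℝ) →ₗ[ℝ] (ι → ℝ) →ₗ[ℝ] ℝ :=
    ContinuousLinearMap.coeLM ℝ ∘ₗ (B : (ι → ℝ) →ₗ[ℝ] (ι → ℝ) →L[ℝ] ℝ)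
  have h := congrArg (fun M => M v w) (Matrix.toLinearMap₂'_toMatrix' (R := ℝ) B')
  rw [Matrix.toLinearMap₂'_apply'] at h
  exact h.symm

noncomputable def hessianMatrix {ι : Type*} [Fintype ι] [DecidableEq ι] (φ : (ι → ℝ) → ℝ)
    (ξ : ι → ℝ) : Matrix ι ι ℝ :=
  Matrix.of fun a b => fderiv ℝ (fun u => fderiv ℝ φ u (Pi.single b 1)) ξ (Pi.single a 1)

theorem fderiv_fderiv_apply_eq_dotProduct_hessianMatrix_mulVec {ι : Type*} [Fintype ι]
    [DecidableEq ι] {φ : (ι → ℝ) → ℝ} {ξ : ι → ℝ} (hφ : DifferentiableAt ℝ (fderiv ℝ φ) ξ)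
    (v w : ι → ℝ) : fderiv ℝ (fderiv ℝ φ) ξ v w = v ⬝ᵥ hessianMatrix φ ξ *ᵥ w := by
  have hpartial : ∀ b, fderiv ℝ (fun u => fderiv ℝ φ u (Pi.single b 1)) ξ =
      (fderiv ℝ (fderiv ℝ φ) ξ).flip (Pi.single b 1) := fun b => by
    simp [fderiv_clm_apply hφ (differentiableAt_const _)]
  simp only [hessianMatrix, hpartial, ContinuousLinearMap.flip_apply]
  exact ContinuousLinearMap.apply_apply_eq_dotProduct_mulVec _ v w

theorem fderiv_apply_eq_mulVec {m p : ℕ} {f : (Fin p → ℝ) → (Fin m → ℝ)} {x : Fin p → ℝ}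
    {J : Matrix (Fin m) (Fin p) ℝ} (hJ : ∀ i j, J i j = fderiv ℝ f x (Pi.single j 1) i)
    (v : Fin p → ℝ) : fderiv ℝ f x v = J *ᵥ v := by
  have hJ' : J = LinearMap.toMatrix' (fderiv ℝ f x).toLinearMap := Matrix.ext fun i j => by
    rw [hJ, LinearMap.toMatrix'_apply]; rfl
  rw [hJ', LinearMap.toMatrix'_mulVec]; rfl

theorem abs_sub_sub_fderiv_le_of_l2OpNorm_hessianMatrix_le {p : ℕ} {φ : (Fin p → ℝ) → ℝ}
    (hφ : ContDiff ℝ 2 φ) {x y : Fin p → ℝ} {H : ℝ}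
    (hH : ∀ ξ ∈ segment ℝ x y, l2OpNorm (hessianMatrix φ ξ) ≤ H) :
    |φ y - φ x - fderiv ℝ φ x (y - x)| ≤ H * _root_.enorm (y - x) ^ 2 / 2 := by
  have hφ' : Differentiable ℝ (fderiv ℝ φ) :=
    (hφ.fderiv_right (m := 1) le_rfl).differentiable one_ne_zero
  refine norm_sub_sub_fderiv_le_of_norm_fderiv_fderiv_le hφ fun ξ hξ => ?_
  rw [Real.norm_eq_abs, fderiv_fderiv_apply_eq_dotProduct_hessianMatrix_mulVec (hφ' ξ)]
  exact (abs_dotProduct_mulVec_le _ _).trans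
    (mul_le_mul_of_nonneg_right (hH ξ hξ) (sq_nonneg _))

theorem gd_step_taylor_remainder_general (p n : ℕ)
    (f : (Fin p → ℝ) → (Fin n → ℝ)) (hf : ContDiff ℝ 2 f)
    (w : Fin p → ℝ) (η H : ℝ)
    (J : (Fin p → ℝ) → Matrix (Fin n) (Fin p) ℝ)
    (hJ : ∀ u i j, J u i j = fderiv ℝ f u (Pi.single j 1) i)
    (Hess : Fin n → (Fin p → ℝ) → Matrix (Fin p) (Fin p) ℝ)
    (hHess : ∀ i u a b, Hess i u a b =
      fderiv ℝ (fun u' => fderiv ℝ (fun z => f z i) u' (Pi.single b 1)) u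
        (Pi.single a 1))
    (r : Fin n → ℝ)
    (w' : Fin p → ℝ) (hw' : w' = w - η • (J w)ᵀ.mulVec r)
    (hHessBound : ∀ i : Fin n, ∀ ξ ∈ segment ℝ w w', l2OpNorm (Hess i ξ) ≤ H) :
    _root_.enorm (f w' - f w + η • (J w * (J w)ᵀ).mulVec r) ≤
      Real.sqrt n / 2 * η ^ 2 * H * l2OpNorm (J w * (J w)ᵀ) * _root_.enorm r ^ 2 := by
  set K := J w * (J w)ᵀ
  have hstep : w' - w = -η • (J w)ᵀ *ᵥ r := by rw [hw', neg_smul]; abel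
  have hlinear : f w' - f w + η • K *ᵥ r = f w' - f w - fderiv ℝ f w (w' - w) := by
    rw [fderiv_apply_eq_mulVec (hJ w), hstep, mulVec_smul, mulVec_mulVec, neg_smul,
      sub_neg_eq_add]
  have hdisplacement :
      _root_.enorm (w' - w) ^ 2 ≤ η ^ 2 * (l2OpNorm K * _root_.enorm r ^ 2) := by
    rw [hstep, sq_enorm_smul, neg_sq]
    exact mul_le_mul_of_nonneg_left (enorm_transpose_mulVec_sq_le _ _) (sq_nonneg η)
  rw [hlinear]
  refine (enorm_le_sqrt_card_mul (c := H * (η ^ 2 * (l2OpNorm K * _root_.enorm r ^ 2)) / 2)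
    fun i => ?_).trans_eq (by ring)
  have hH : 0 ≤ H := (norm_nonneg _).trans (hHessBound i w (left_mem_segment ℝ w w'))
  have hcomponent := abs_sub_sub_fderiv_le_of_l2OpNorm_hessianMatrix_le (φ := fun z => f z i)
    ((contDiff_apply ℝ ℝ i).comp hf) fun ξ hξ =>
      (congrArg l2OpNorm (Matrix.ext (hHess i ξ))).symm.trans_le (hHessBound i ξ hξ)
  rw [fderiv_apply (hf.differentiable two_ne_zero w)] at hcomponent
  calc _ ≤ H * _root_.enorm (w' - w) ^ 2 / 2 := hcomponent
    _ ≤ _ := by gcongr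

/-- **Second-order Taylor step** in the proof of Lemma A.1: one gradient
descent update changes the network outputs by `-ηK(w)r` up to a second-order
remainder controlled by the Hessian bound on the segment `[w, w']`. -/
theorem gd_step_taylor_remainder (p n : ℕ)
    (f : (Fin p → ℝ) → (Fin n → ℝ)) (hf : ContDiff ℝ 2 f)
    (y : Fin n → ℝ) (w : Fin p → ℝ) (η H : ℝ) (hη : 0 < η)
    (J : (Fin p → ℝ) → Matrix (Fin n) (Fin p) ℝ)
    (hJ : ∀ u i j, J u i j = fderiv ℝ f u (Pi.single j 1) i)
    (Hess : Fin n → (Fin p → ℝ) → Matrix (Fin p) (Fin p) ℝ)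
    (hHess : ∀ i u a b, Hess i u a b =
      fderiv ℝ (fun u' => fderiv ℝ (fun z => f z i) u' (Pi.single b 1)) u
        (Pi.single a 1))
    (r : Fin n → ℝ) (hr : r = f w - y)
    (w' : Fin p → ℝ) (hw' : w' = w - η • (J w)ᵀ.mulVec r)
    (hHessBound : ∀ i : Fin n, ∀ ξ ∈ segment ℝ w w', l2OpNorm (Hess i ξ) ≤ H) :
    _root_.enorm (f w' - f w + η • (J w * (J w)ᵀ).mulVec r) ≤
      Real.sqrt n / 2 * η ^ 2 * H * l2OpNorm (J w * (J w)ᵀ) * _root_.enorm r ^ 2 :=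
  gd_step_taylor_remainder_general p n f hf w η H J hJ Hess hHess r w' hw' hHessBound
end
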